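/- Fix ω ∈ ℂ with ω ∉ ℝ, let Γ = {m + nω : m, n ∈ ℤ}, and let p1, p2 ∈ ℂ with p1 − p2 ∉ Γ. Let w : ℂ∖((p1+Γ) ∪ (p2+Γ)) → ℂ be holomorphic and Γ-periodic with a simple pole at p1 with residue 1 and a simple pole at p2 with residue −1. Let F : ℂ∖((p1+Γ) ∪ (p2+Γ)) → ℂ be holomorphic and Γ-periodic such that z ↦ (z−p1)F(z) and z ↦ (z−p2)F(z) extend holomorphically across p1 and p2 respectively (F has at most simple poles at p1 and p2). Then there exist α, β ∈ ℂ with F(z) = α·w(z) + β for all z ∉ (p1+Γ) ∪ (p2+Γ). -/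

import Mathlib

open Complex Metric Set

/-- The lattice `Γ = {m + n·ω : m, n ∈ ℤ}` associated to `ω`. -/
def lattice (ω : ℂ) : Set ℂ := {z : ℂ | ∃ m n : ℤ, z = (m : ℂ) + (n : ℂ) * ω}

/-- The complement of `(p1 + Γ) ∪ (p2 + Γ)` in `ℂ`. -/
def latDom (ω p1 p2 : ℂ) : Set ℂ := {z : ℂ | z - p1 ∉ lattice ω ∧ z - p2 ∉ lattice ω}

/-!
Let `α` be the residue of `F` at `p1`. Then `G = F - α w` is `Γ`-periodic, its singularities on
`p1 + Γ` are removable, and it has at most a simple pole at `p2`. The residue `r` of `G` at `p2`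
vanishes: for `Im ω > 0`, in the variable `q = exp (2πiz)` the function `G` becomes a function `ψ`
on `ℂˣ` invariant under `q ↦ exp (2πiω) q`, so `∮ ψ(q) dq / q` is the same on the two boundary
circles of an annulus `‖exp (2πiω)‖ R ≤ ‖q‖ ≤ R` around `exp (2πi p2)`, while the residue theorem
says that the two integrals differ by `(2πi)² r`. Hence `G` extends to an entire doubly periodic
function, which is constant by Liouville's theorem.
-/

open Filter Function Topology
open scoped Real

section Lattice

variable {ω : ℂ}

lemma coe_span_pair_eq_lattice (ω : ℂ) :
    (Submodule.span ℤ {1, ω} : Set ℂ) = lattice ω := by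
  ext z
  simp [Submodule.mem_span_pair, lattice, eq_comm]

lemma add_mem_lattice_iff {a b : ℂ} (hb : b ∈ lattice ω) :
    a + b ∈ lattice ω ↔ a ∈ lattice ω := by
  rw [← coe_span_pair_eq_lattice] at *
  exact Submodule.add_mem_iff_left _ hb

lemma sub_mem_lattice_comm {a b : ℂ} : a - b ∈ lattice ω ↔ b - a ∈ lattice ω := by
  simp only [← coe_span_pair_eq_lattice, SetLike.mem_coe]
  rw [← neg_sub, neg_mem_iff]

lemma zero_mem_lattice (ω : ℂ) : 0 ∈ lattice ω := ⟨0, 0, by simp⟩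

lemma one_mem_lattice (ω : ℂ) : 1 ∈ lattice ω := ⟨1, 0, by simp⟩

lemma self_mem_lattice (ω : ℂ) : ω ∈ lattice ω := ⟨0, 1, by simp⟩

lemma lattice_neg (ω : ℂ) : lattice (-ω) = lattice ω := by
  ext z
  constructor <;> rintro ⟨m, n, rfl⟩ <;> exact ⟨m, -n, by push_cast; ring⟩

lemma add_sub_mem_lattice_iff {z γ p : ℂ} (hγ : γ ∈ lattice ω) :
    z + γ - p ∈ lattice ω ↔ z - p ∈ lattice ω := by
  rw [add_sub_right_comm, add_mem_lattice_iff hγ]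

def periodPair (hω : ω.im ≠ 0) : PeriodPair where
  ω₁ := 1
  ω₂ := ω
  indep := by
    refine LinearIndependent.pair_iff.2 fun a b h => ?_
    have hb : b = 0 := by simpa [hω] using congrArg Complex.im h
    subst hb
    simpa using h

lemma coe_periodPair_lattice (hω : ω.im ≠ 0) :
    ((periodPair hω).lattice : Set ℂ) = lattice ω :=
  coe_span_pair_eq_lattice ω

lemma eventually_nhdsNE_sub_notMem_lattice (hω : ω.im ≠ 0) (p : ℂ) :
    ∀ᶠ z in 𝓝[≠] p, z - p ∉ lattice ω := by
  have h : ∀ᶠ z in 𝓝 p, z - p ∈ ((periodPair hω).lattice \ {0} : Set ℂ)ᶜ :=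
    (continuous_sub_right p).continuousAt.preimage_mem_nhds
      (by simpa using (periodPair hω).compl_lattice_sdiff_singleton_mem_nhds 0)
  filter_upwards [nhdsWithin_le_nhds h, self_mem_nhdsWithin] with z hz hzp
  simp only [coe_periodPair_lattice, mem_compl_iff, Set.mem_sdiff, mem_singleton_iff,
    not_and, not_not] at hz
  exact fun h => hzp (sub_eq_zero.1 (hz h))

lemma isClosed_setOf_sub_mem_lattice (hω : ω.im ≠ 0) (p : ℂ) :
    IsClosed {z | z - p ∈ lattice ω} := by
  rw [← coe_periodPair_lattice hω]
  exact (periodPair hω).isClosed_lattice.preimage (continuous_sub_right p)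

end Lattice

section Periodic

variable {ω : ℂ} {f : ℂ → ℂ}

lemma periodic_of_mem_lattice (h1 : Periodic f 1) (h2 : Periodic f ω) {γ : ℂ}
    (hγ : γ ∈ lattice ω) : Periodic f γ := by
  obtain ⟨m, n, rfl⟩ := hγ
  simpa using (h1.int_mul m).add_period (h2.int_mul n)

lemma add_mem_latDom_iff {p1 p2 z γ : ℂ} (hγ : γ ∈ lattice ω) :
    z + γ ∈ latDom ω p1 p2 ↔ z ∈ latDom ω p1 p2 := by
  simp only [latDom, mem_ofPred_eq, add_sub_mem_lattice_iff hγ]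

lemma periodic_indicator_latDom {p1 p2 c : ℂ} (hc : c ∈ lattice ω)
    (hf : ∀ z ∈ latDom ω p1 p2, f (z + c) = f z) :
    Periodic ((latDom ω p1 p2).indicator f) c := by
  intro z
  by_cases hz : z ∈ latDom ω p1 p2
  · rw [indicator_of_mem ((add_mem_latDom_iff hc).2 hz), indicator_of_mem hz, hf z hz]
  · rw [indicator_of_notMem (mt (add_mem_latDom_iff hc).1 hz), indicator_of_notMem hz]

lemma isOpen_latDom (hω : ω.im ≠ 0) (p1 p2 : ℂ) : IsOpen (latDom ω p1 p2) :=
  (isClosed_setOf_sub_mem_lattice hω p1).isOpen_compl.inter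
    (isClosed_setOf_sub_mem_lattice hω p2).isOpen_compl

lemma eventually_nhdsNE_mem_latDom (hω : ω.im ≠ 0) {p1 p2 : ℂ} (hp : p1 - p2 ∉ lattice ω) :
    ∀ᶠ z in 𝓝[≠] p1, z ∈ latDom ω p1 p2 :=
  (eventually_nhdsNE_sub_notMem_lattice hω p1).and <| nhdsWithin_le_nhds <|
    (isClosed_setOf_sub_mem_lattice hω p2).isOpen_compl.mem_nhds hp

end Periodic

lemma AnalyticAt.dslope {E : Type*} [NormedAddCommGroup E] [NormedSpace ℂ E] [CompleteSpace E]
    {g : ℂ → E} {p : ℂ} (hg : AnalyticAt ℂ g p) : AnalyticAt ℂ (dslope g p) p := by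
  have hs : {z | AnalyticAt ℂ g z} ∈ 𝓝 p := hg.eventually_analyticAt
  exact ((Complex.differentiableOn_dslope hs).2
    fun z hz => hz.differentiableAt.differentiableWithinAt).analyticAt hs

/-- `f` has at most a simple pole at `p`, with residue `r`; for `r = 0` the singularity is
removable. -/
def HasSimplePoleAt (f : ℂ → ℂ) (r p : ℂ) : Prop :=
  ∃ g : ℂ → ℂ, AnalyticAt ℂ g p ∧ g p = r ∧ ∀ᶠ z in 𝓝[≠] p, g z = (z - p) * f z

lemma hasSimplePoleAt_of_differentiableOn {f g : ℂ → ℂ} {p : ℂ} {U : Set ℂ} (hU : U ∈ 𝓝 p)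
    (hg : DifferentiableOn ℂ g U) (hfg : ∀ z ∈ U, z ≠ p → g z = (z - p) * f z) :
    HasSimplePoleAt f (g p) p :=
  ⟨g, hg.analyticAt hU, rfl, by
    filter_upwards [nhdsWithin_le_nhds hU, self_mem_nhdsWithin] with z hz hzp using hfg z hz hzp⟩

namespace HasSimplePoleAt

variable {f f' k φ : ℂ → ℂ} {r r' p q : ℂ}

lemma congr (hf : HasSimplePoleAt f r p) (h : f =ᶠ[𝓝[≠] p] f') : HasSimplePoleAt f' r p := by
  obtain ⟨g, hg, rfl, hfg⟩ := hf
  exact ⟨g, hg, rfl, by filter_upwards [hfg, h] with z h1 h2; rw [h1, h2]⟩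

lemma sub (hf : HasSimplePoleAt f r p) (hf' : HasSimplePoleAt f' r' p) :
    HasSimplePoleAt (fun z => f z - f' z) (r - r') p := by
  obtain ⟨g, hg, rfl, hfg⟩ := hf
  obtain ⟨g', hg', rfl, hfg'⟩ := hf'
  exact ⟨fun z => g z - g' z, hg.sub hg', rfl, by
    filter_upwards [hfg, hfg'] with z h1 h2; rw [h1, h2]; ring⟩

lemma mul (hf : HasSimplePoleAt f r p) (hk : AnalyticAt ℂ k p) :
    HasSimplePoleAt (fun z => f z * k z) (r * k p) p := by
  obtain ⟨g, hg, rfl, hfg⟩ := hf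
  exact ⟨fun z => g z * k z, hg.mul hk, rfl, by
    filter_upwards [hfg] with z h; rw [h]; ring⟩

lemma comp (hf : HasSimplePoleAt f r p) (hφ : AnalyticAt ℂ φ q) (hφq : φ q = p)
    (hφ' : deriv φ q ≠ 0) : HasSimplePoleAt (f ∘ φ) (r / deriv φ q) q := by
  obtain ⟨g, hg, rfl, hfg⟩ := hf
  have hDq : dslope φ q q = deriv φ q := dslope_same φ q
  have hφD : ∀ u, φ u - p = (u - q) * dslope φ q u := fun u => by
    rw [← hφq, ← smul_eq_mul, sub_smul_dslope]
  have hD0 : ∀ᶠ u in 𝓝[≠] q, dslope φ q u ≠ 0 :=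
    nhdsWithin_le_nhds (hφ.dslope.continuousAt.eventually_ne (hDq ▸ hφ'))
  have hφne : ∀ᶠ u in 𝓝[≠] q, φ u ≠ p := by
    filter_upwards [hD0, self_mem_nhdsWithin] with u h1 h2
    rw [← sub_ne_zero, hφD]
    exact mul_ne_zero (sub_ne_zero.2 h2) h1
  have hφtend : Tendsto φ (𝓝[≠] q) (𝓝[≠] p) :=
    tendsto_nhdsWithin_of_tendsto_nhds_of_eventually_within _
      (hφq ▸ hφ.continuousAt.tendsto.mono_left nhdsWithin_le_nhds) hφne
  refine ⟨fun u => g (φ u) / dslope φ q u,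
    ((hφq ▸ hg).comp hφ).div hφ.dslope (hDq ▸ hφ'), by simp [hφq], ?_⟩
  filter_upwards [hD0, hφtend.eventually hfg] with u hDu hu
  rw [comp_apply, hu, hφD]
  field_simp

lemma exists_eventuallyEq_add (hf : HasSimplePoleAt f r p) :
    ∃ h : ℂ → ℂ, AnalyticAt ℂ h p ∧ ∀ᶠ z in 𝓝[≠] p, f z = r * (z - p)⁻¹ + h z := by
  obtain ⟨g, hg, rfl, hfg⟩ := hf
  refine ⟨dslope g p, hg.dslope, ?_⟩
  filter_upwards [hfg, self_mem_nhdsWithin] with z hz hzp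
  have hslope := sub_smul_dslope g p z
  rw [smul_eq_mul, hz] at hslope
  have hzp' : z - p ≠ 0 := sub_ne_zero.2 hzp
  field_simp
  linear_combination -hslope

end HasSimplePoleAt

lemma circleIntegral_sub_inv_of_notMem_closedBall {c a : ℂ} {r : ℝ} (hr : 0 ≤ r)
    (ha : a ∉ closedBall c r) : (∮ z in C(c, r), (z - a)⁻¹) = 0 := by
  have hne : ∀ z ∈ closedBall c r, z - a ≠ 0 := fun z hz h => ha (sub_eq_zero.1 h ▸ hz)
  exact circleIntegral_eq_zero_of_differentiable_on_off_countable hr countable_empty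
    (fun z hz => ((continuous_sub_right a).continuousAt.inv₀ (hne z hz)).continuousWithinAt)
    fun z hz => (differentiableAt_id.sub_const a).inv (hne z (ball_subset_closedBall hz.1))

theorem circleIntegral_sub_circleIntegral_of_hasSimplePoleAt {f : ℂ → ℂ} {c a ρ : ℂ} {r R : ℝ}
    (hr : 0 < r) (ha : a ∈ ball c R \ closedBall c r)
    (hf : ∀ z ∈ closedBall c R \ ball c r, z ≠ a → DifferentiableAt ℂ f z)
    (hpole : HasSimplePoleAt f ρ a) :
    (∮ z in C(c, R), f z) - (∮ z in C(c, r), f z) = 2 * π * I * ρ := by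
  obtain ⟨h, hh, hfh⟩ := hpole.exists_eventuallyEq_add
  have hrR : r ≤ R := ((lt_of_not_ge ha.2).trans ha.1).le
  -- `f` minus its principal part at `a`, continuously extended at `a`
  set Φ := update (fun z => f z - ρ * (z - a)⁻¹) a (h a)
  have hΦ : ∀ z ≠ a, Φ =ᶠ[𝓝 z] fun z => f z - ρ * (z - a)⁻¹ := fun z hz =>
    (eventually_ne_nhds hz).mono fun u hu => update_of_ne hu _ _
  have hΦd : ∀ z ∈ closedBall c R \ ball c r, z ≠ a → DifferentiableAt ℂ Φ z := fun z hz hza =>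
    ((hf z hz hza).sub (((differentiableAt_id.sub_const a).inv (sub_ne_zero.2 hza)).const_mul
      ρ)).congr_of_eventuallyEq (hΦ z hza)
  have hΦa : ContinuousAt Φ a := continuousAt_update_same.2 <|
    (hh.continuousAt.tendsto.mono_left nhdsWithin_le_nhds).congr' <| by
      filter_upwards [hfh] with z hz; rw [hz]; ring
  have hannulus : (∮ z in C(c, R), Φ z) = ∮ z in C(c, r), Φ z :=
    circleIntegral_eq_of_differentiable_on_annulus_off_countable hr hrR (countable_singleton a)
      (fun z hz => if hza : z = a then hza ▸ hΦa.continuousWithinAt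
        else (hΦd z hz hza).continuousAt.continuousWithinAt)
      fun z hz => hΦd z ⟨ball_subset_closedBall hz.1.1,
        fun h => hz.1.2 (ball_subset_closedBall h)⟩ hz.2
  have hsplit : ∀ s, 0 ≤ s → sphere c s ⊆ closedBall c R \ ball c r → a ∉ sphere c s →
      (∮ z in C(c, s), Φ z) = (∮ z in C(c, s), f z) - ρ * ∮ z in C(c, s), (z - a)⁻¹ := by
    intro s hs hsub has
    have hne : ∀ z ∈ sphere c s, z ≠ a := fun z hz hza => has (hza ▸ hz)
    rw [circleIntegral.integral_congr hs fun z hz => update_of_ne (hne z hz) _ _,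
      circleIntegral.integral_sub, circleIntegral.integral_const_mul]
    · exact ContinuousOn.circleIntegrable hs fun z hz =>
        (hf z (hsub hz) (hne z hz)).continuousAt.continuousWithinAt
    · exact ContinuousOn.circleIntegrable hs fun z hz => (continuousAt_const.mul
        ((continuous_sub_right a).continuousAt.inv₀
          (sub_ne_zero.2 (hne z hz)))).continuousWithinAt
  have hsphere : ∀ s, r ≤ s → s ≤ R → sphere c s ⊆ closedBall c R \ ball c r :=
    fun s hrs hsR z hz => by
      simp only [mem_sphere, Set.mem_sdiff, mem_closedBall, mem_ball, not_lt] at hz ⊢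
      constructor <;> linarith
  rw [hsplit R (hr.le.trans hrR) (hsphere R hrR le_rfl) (fun h => (ne_of_lt ha.1) h),
    hsplit r hr.le (hsphere r le_rfl hrR) (fun h => ha.2 (sphere_subset_closedBall h)),
    circleIntegral.integral_sub_inv_of_mem_ball ha.1,
    circleIntegral_sub_inv_of_notMem_closedBall hr.le ha.2] at hannulus
  linear_combination hannulus

lemma circleIntegral_div_self_eq_intervalIntegral {ψ : ℂ → ℂ} {R : ℝ} (hR : R ≠ 0) :
    (∮ z in C(0, R), ψ z / z) = ∫ θ in (0 : ℝ)..2 * π, I * ψ (circleMap 0 R θ) := by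
  simp only [circleIntegral, deriv_circleMap, smul_eq_mul]
  refine intervalIntegral.integral_congr fun θ _ => ?_
  have := circleMap_ne_center (c := 0) hR (θ := θ)
  field_simp

lemma circleIntegral_div_self_of_mul_invariant {ψ : ℂ → ℂ} {t : ℂ} {R : ℝ} (ht : t ≠ 0)
    (hR : 0 < R) (hψ : ∀ z ∈ sphere (0 : ℂ) R, ψ (t * z) = ψ z) :
    (∮ z in C(0, ‖t‖ * R), ψ z / z) = ∮ z in C(0, R), ψ z / z := by
  have hmap : ∀ θ, circleMap 0 (‖t‖ * R) θ = t * circleMap 0 R (θ - arg t) := fun θ => by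
    have hexp : exp ((θ - arg t) * I) * exp (arg t * I) = exp (θ * I) := by
      rw [← exp_add]; ring_nf
    simp only [circleMap_zero]
    push_cast
    linear_combination (-(‖t‖ : ℂ) * R) * hexp +
      (R * exp ((θ - arg t) * I)) * norm_mul_exp_arg_mul_I t
  rw [circleIntegral_div_self_eq_intervalIntegral (mul_ne_zero (norm_ne_zero_iff.2 ht) hR.ne'),
    circleIntegral_div_self_eq_intervalIntegral hR.ne']
  simp_rw [hmap, hψ _ (circleMap_mem_sphere 0 hR.le _)]
  rw [intervalIntegral.integral_comp_sub_right (fun θ => I * ψ (circleMap 0 R θ))]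
  have hper : Periodic (fun θ => I * ψ (circleMap 0 R θ)) (2 * π) := fun θ => by
    simp only [periodic_circleMap 0 R θ]
  simpa [sub_eq_neg_add] using hper.intervalIntegral_add_eq (-arg t) 0

namespace Function.Periodic

variable {h : ℝ} {f : ℂ → ℂ} {r p : ℂ}

local notation "𝕢" => qParam

lemma qParam_add (h : ℝ) (a b : ℂ) : 𝕢 h (a + b) = 𝕢 h a * 𝕢 h b := by
  simp only [qParam, ← exp_add]
  ring_nf

lemma cuspFunction_qParam_mul {ω q : ℂ} (hh : h ≠ 0) (hf : Periodic f h) (hfω : Periodic f ω)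
    (hq : q ≠ 0) : cuspFunction h f (𝕢 h ω * q) = cuspFunction h f q := by
  rw [← qParam_right_inv hh hq, ← qParam_add, eq_cuspFunction hh hf, eq_cuspFunction hh hf,
    add_comm, hfω]

lemma _root_.HasSimplePoleAt.cuspFunction (hh : h ≠ 0) (hf : Periodic f h)
    (hpole : HasSimplePoleAt f r p) :
    HasSimplePoleAt (Periodic.cuspFunction h f) (2 * π * I / h * 𝕢 h p * r) (𝕢 h p) := by
  set qs := 𝕢 h p
  have hqs : qs ≠ 0 := qParam_ne_zero p
  -- a holomorphic local inverse of `𝕢 h` near `qs`, sending `qs` to `p`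
  set ℓ : ℂ → ℂ := fun u => p + invQParam h (u / qs)
  have hℓ : ∀ u ≠ 0, 𝕢 h (ℓ u) = u := fun u hu => by
    rw [qParam_add, qParam_right_inv hh (div_ne_zero hu hqs), mul_div_cancel₀ _ hqs]
  have hℓqs : ℓ qs = p := by simp [ℓ, invQParam, div_self hqs]
  have hslit : qs / qs ∈ slitPlane := by rw [div_self hqs]; exact one_mem_slitPlane
  have hℓan : AnalyticAt ℂ ℓ qs := analyticAt_const.add <| analyticAt_const.mul <|
    (analyticAt_id.div_const (c := qs)).clog hslit
  have hℓ' : HasDerivAt ℓ (h / (2 * π * I) * (1 / qs / (qs / qs))) qs :=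
    (((hasDerivAt_id qs).div_const qs).clog hslit).const_mul _ |>.const_add p
  have hne : deriv ℓ qs ≠ 0 := by
    rw [hℓ'.deriv]; simp [hqs, hh]
  have key := (hpole.comp hℓan hℓqs hne).congr (f' := Periodic.cuspFunction h f) <| by
    filter_upwards [nhdsWithin_le_nhds (eventually_ne_nhds hqs)] with u hu
    rw [comp_apply, ← eq_cuspFunction hh hf, hℓ u hu]
  convert key using 1
  rw [hℓ'.deriv]
  field_simp

lemma norm_qParam_le_norm_qParam_iff (hh : 0 < h) {a b : ℂ} :
    ‖𝕢 h a‖ ≤ ‖𝕢 h b‖ ↔ b.im ≤ a.im := by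
  rw [norm_qParam, norm_qParam, Real.exp_le_exp, div_le_div_iff_of_pos_right hh,
    mul_le_mul_left_of_neg (by simpa using Real.pi_pos)]

lemma norm_qParam_lt_norm_qParam_iff (hh : 0 < h) {a b : ℂ} :
    ‖𝕢 h a‖ < ‖𝕢 h b‖ ↔ b.im < a.im :=
  lt_iff_lt_of_le_iff_le (norm_qParam_le_norm_qParam_iff hh)

lemma qParam_one_eq_of_sub_mem_lattice {ω z : ℂ} (hz : z - p ∈ lattice ω)
    (him : |(z - p).im| < ω.im) : 𝕢 1 z = 𝕢 1 p := by
  obtain ⟨m, n, hmn⟩ := hz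
  have hn : n = 0 := by
    have hb : 0 < ω.im := (abs_nonneg _).trans_lt him
    have : |(n : ℝ)| * ω.im < 1 * ω.im := by simpa [hmn, abs_mul, abs_of_pos hb] using him
    exact Int.abs_lt_one_iff.1 (by exact_mod_cast lt_of_mul_lt_mul_right this hb.le)
  have hm : 𝕢 1 (m : ℂ) = 1 := by
    rw [qParam, ofReal_one, div_one, mul_comm]
    exact exp_int_mul_two_pi_mul_I m
  rw [show z = p + m by simpa [hn, sub_eq_iff_eq_add'] using hmn, qParam_add, hm, mul_one]

end Function.Periodic

section Elliptic

open Function.Periodic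

variable {ω r p : ℂ} {f : ℂ → ℂ}

lemma differentiableAt_cuspFunction_of_norm_le (hω : 0 < ω.im) (h1 : Periodic f 1)
    (hf : ∀ z, z - p ∉ lattice ω → DifferentiableAt ℂ f z) {u : ℂ}
    (hlo : ‖qParam 1 (p + ω / 2)‖ ≤ ‖u‖) (hhi : ‖u‖ ≤ ‖qParam 1 (p - ω / 2)‖)
    (hu : u ≠ qParam 1 p) : DifferentiableAt ℂ (Periodic.cuspFunction 1 f) u := by
  have hu0 : u ≠ 0 := norm_pos_iff.1 ((norm_pos_iff.2 (qParam_ne_zero _)).trans_le hlo)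
  obtain ⟨z, rfl⟩ : ∃ z, qParam 1 z = u := ⟨_, qParam_right_inv one_ne_zero hu0⟩
  refine differentiableAt_cuspFunction one_ne_zero (by simpa using h1) (hf z fun hzp => hu ?_)
  rw [norm_qParam_le_norm_qParam_iff one_pos] at hlo hhi
  simp only [sub_im, add_im, div_ofNat_im] at hlo hhi
  exact qParam_one_eq_of_sub_mem_lattice hzp (by rw [abs_lt, sub_im]; constructor <;> linarith)

lemma HasSimplePoleAt.eq_zero_of_periodic_of_im_pos (hω : 0 < ω.im) (h1 : Periodic f 1)
    (h2 : Periodic f ω) (hf : ∀ z, z - p ∉ lattice ω → DifferentiableAt ℂ f z)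
    (hpole : HasSimplePoleAt f r p) : r = 0 := by
  have h1' : Periodic f ((1 : ℝ) : ℂ) := by simpa using h1
  set ψ := Periodic.cuspFunction 1 f
  set qs := qParam 1 p
  set t := qParam 1 ω
  -- the annulus `‖t‖ * R ≤ ‖u‖ ≤ R` is the image of the strip `|Im (z - p)| ≤ Im ω / 2`,
  -- which meets `p + Γ` only in `p + ℤ`
  set R := ‖qParam 1 (p - ω / 2)‖
  have hqs : qs ≠ 0 := qParam_ne_zero p
  have ht : t ≠ 0 := qParam_ne_zero ω
  have hR : 0 < R := norm_pos_iff.2 (qParam_ne_zero _)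
  have htR : ‖t‖ * R = ‖qParam 1 (p + ω / 2)‖ := by
    rw [← norm_mul, ← qParam_add]; ring_nf
  have hqs_mem : qs ∈ ball 0 R \ closedBall 0 (‖t‖ * R) := by
    have hout : ‖qParam 1 p‖ < ‖qParam 1 (p - ω / 2)‖ :=
      (norm_qParam_lt_norm_qParam_iff one_pos).2 (by simp; linarith)
    have hin : ‖qParam 1 (p + ω / 2)‖ < ‖qParam 1 p‖ :=
      (norm_qParam_lt_norm_qParam_iff one_pos).2 (by simp; linarith)
    exact ⟨mem_ball_zero_iff.2 hout, by simpa [htR] using hin⟩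
  have hdiff : ∀ u ∈ closedBall 0 R \ ball 0 (‖t‖ * R), u ≠ qs →
      DifferentiableAt ℂ (fun u => ψ u * u⁻¹) u := by
    rintro u ⟨huR, hutR⟩ huqs
    rw [mem_closedBall_zero_iff] at huR
    rw [mem_ball_zero_iff, not_lt, htR] at hutR
    have hu0 : u ≠ 0 := norm_pos_iff.1 ((norm_pos_iff.2 (qParam_ne_zero _)).trans_le hutR)
    exact (differentiableAt_cuspFunction_of_norm_le hω h1 hf hutR huR huqs).mul
      (differentiableAt_inv hu0)
  have hpole' : HasSimplePoleAt (fun u => ψ u * u⁻¹) (2 * π * I / (1 : ℝ) * qs * r * qs⁻¹) qs :=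
    (hpole.cuspFunction one_ne_zero h1').mul (analyticAt_inv hqs)
  have hres := circleIntegral_sub_circleIntegral_of_hasSimplePoleAt
    (mul_pos (norm_pos_iff.2 ht) hR) hqs_mem hdiff hpole'
  have hinv := circleIntegral_div_self_of_mul_invariant ht hR fun z hz =>
    cuspFunction_qParam_mul one_ne_zero h1' h2 (ne_of_mem_sphere hz hR.ne')
  simp only [div_eq_mul_inv] at hinv
  rw [hinv, sub_self] at hres
  simpa [hqs, two_pi_I_ne_zero] using hres.symm

lemma HasSimplePoleAt.eq_zero_of_periodic (hω : ω.im ≠ 0) (h1 : Periodic f 1)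
    (h2 : Periodic f ω) (hf : ∀ z, z - p ∉ lattice ω → DifferentiableAt ℂ f z)
    (hpole : HasSimplePoleAt f r p) : r = 0 := by
  rcases hω.lt_or_gt with hneg | hpos
  · refine hpole.eq_zero_of_periodic_of_im_pos (ω := -ω) (by simpa using hneg) h1 h2.neg ?_
    simpa only [lattice_neg] using hf
  · exact hpole.eq_zero_of_periodic_of_im_pos hpos h1 h2 hf

lemma HasSimplePoleAt.exists_periodic_extension (hω : ω.im ≠ 0) (h1 : Periodic f 1)
    (h2 : Periodic f ω) (hpole : HasSimplePoleAt f 0 p) :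
    ∃ f' : ℂ → ℂ, Periodic f' 1 ∧ Periodic f' ω ∧ (∀ z, z - p ∉ lattice ω → f' z = f z) ∧
      ∀ z, (z - p ∉ lattice ω → DifferentiableAt ℂ f z) → DifferentiableAt ℂ f' z := by
  classical
  obtain ⟨h, hh, hfh⟩ := hpole.exists_eventuallyEq_add
  set f' := fun z => if z - p ∈ lattice ω then h p else f z
  have hper : ∀ γ ∈ lattice ω, Periodic f' γ := fun γ hγ z => by
    simp only [f', add_sub_mem_lattice_iff hγ, periodic_of_mem_lattice h1 h2 hγ z]
  have hf'p : DifferentiableAt ℂ f' p := by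
    refine hh.differentiableAt.congr_of_eventuallyEq <|
      eventuallyEq_nhds_of_eventuallyEq_nhdsNE ?_ (by simp [f', zero_mem_lattice])
    filter_upwards [hfh, eventually_nhdsNE_sub_notMem_lattice hω p] with z hz hzp
    simp [f', hzp, hz]
  refine ⟨f', hper 1 (one_mem_lattice ω), hper ω (self_mem_lattice ω), fun z hz => if_neg hz,
    fun z hz => ?_⟩
  by_cases hzp : z - p ∈ lattice ω
  · have hcomp : DifferentiableAt ℂ (fun u => f' (u - (z - p))) z :=
      (by simpa using hf'p : DifferentiableAt ℂ f' (z - (z - p))).comp z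
        (differentiableAt_id.sub_const _)
    simpa only [(hper _ hzp).sub_eq] using hcomp
  · exact (hz hzp).congr_of_eventuallyEq <|
      eventually_of_mem ((isClosed_setOf_sub_mem_lattice hω p).isOpen_compl.mem_nhds hzp)
        fun u hu => if_neg hu

lemma Differentiable.apply_eq_apply_of_periodic (hω : ω.im ≠ 0) (hf : Differentiable ℂ f)
    (h1 : Periodic f 1) (h2 : Periodic f ω) (z w : ℂ) : f z = f w := by
  set b := (periodPair hω).basis
  have hspan : (Submodule.span ℤ (range b) : Set ℂ) = lattice ω := by
    rw [← (periodPair hω).lattice_eq_span_range_basis, coe_periodPair_lattice]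
  have hK : IsCompact (closure (ZSpan.fundamentalDomain b)) :=
    (ZSpan.fundamentalDomain_isBounded b).isCompact_closure
  refine hf.apply_eq_apply_of_bounded ((hK.image hf.continuous).isBounded.subset ?_) z w
  rintro _ ⟨u, rfl⟩
  refine ⟨ZSpan.fract b u, subset_closure (ZSpan.fract_mem_fundamentalDomain b u), ?_⟩
  rw [ZSpan.fract_apply, sub_eq_add_neg]
  exact periodic_of_mem_lattice h1 h2 (hspan ▸ neg_mem (ZSpan.floor b u).2) u

lemma HasSimplePoleAt.exists_eq_const_of_periodic (hω : ω.im ≠ 0) (h1 : Periodic f 1)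
    (h2 : Periodic f ω) (hf : ∀ z, z - p ∉ lattice ω → DifferentiableAt ℂ f z)
    (hpole : HasSimplePoleAt f r p) : ∃ β, ∀ z, z - p ∉ lattice ω → f z = β := by
  rw [hpole.eq_zero_of_periodic hω h1 h2 hf] at hpole
  obtain ⟨f', h1', h2', hf'f, hf'⟩ := hpole.exists_periodic_extension hω h1 h2
  have hconst := Differentiable.apply_eq_apply_of_periodic hω (fun z => hf' z (hf z)) h1' h2'
  exact ⟨f' 0, fun z hz => (hf'f z hz).symm.trans (hconst z 0)⟩

end Elliptic

lemma exists_eq_const_on_latDom {ω r p1 p2 : ℂ} {f : ℂ → ℂ} (hω : ω.im ≠ 0)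
    (hp : p1 - p2 ∉ lattice ω) (hf : DifferentiableOn ℂ f (latDom ω p1 p2))
    (h1 : ∀ z ∈ latDom ω p1 p2, f (z + 1) = f z) (h2 : ∀ z ∈ latDom ω p1 p2, f (z + ω) = f z)
    (hp1 : HasSimplePoleAt f 0 p1) (hp2 : HasSimplePoleAt f r p2) :
    ∃ β, ∀ z ∈ latDom ω p1 p2, f z = β := by
  set D := latDom ω p1 p2
  set G := D.indicator f
  have hGf : ∀ z ∈ D, G z = f z := fun z hz => indicator_of_mem hz f
  have hG : ∀ z ∈ D, DifferentiableAt ℂ G z := fun z hz =>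
    (hf.congr hGf).differentiableAt ((isOpen_latDom hω p1 p2).mem_nhds hz)
  have hD1 : ∀ᶠ z in 𝓝[≠] p1, z ∈ D := eventually_nhdsNE_mem_latDom hω hp
  have hD2 : ∀ᶠ z in 𝓝[≠] p2, z ∈ D :=
    (eventually_nhdsNE_mem_latDom hω (sub_mem_lattice_comm.not.1 hp)).mono fun z hz => hz.symm
  have hGp1 : HasSimplePoleAt G 0 p1 :=
    hp1.congr (by filter_upwards [hD1] with z hz using (hGf z hz).symm)
  obtain ⟨G₁, h1', h2', hG₁G, hG₁⟩ := hGp1.exists_periodic_extension hω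
    (periodic_indicator_latDom (one_mem_lattice ω) h1)
    (periodic_indicator_latDom (self_mem_lattice ω) h2)
  have hG₁f : ∀ z ∈ D, G₁ z = f z := fun z hz => (hG₁G z hz.1).trans (hGf z hz)
  have hG₁p2 : HasSimplePoleAt G₁ r p2 :=
    hp2.congr (by filter_upwards [hD2] with z hz using (hG₁f z hz).symm)
  obtain ⟨β, hβ⟩ := hG₁p2.exists_eq_const_of_periodic hω h1' h2' fun z hz =>
    hG₁ z fun hz1 => hG z ⟨hz1, hz⟩
  exact ⟨β, fun z hz => (hG₁f z hz).symm.trans (hβ z hz.2)⟩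

/-- Let `w` be `Γ`-periodic holomorphic on `ℂ∖((p1+Γ)∪(p2+Γ))` with simple
poles of residues `1` and `−1` at `p1` and `p2`, and let `F` be `Γ`-periodic holomorphic on
the same domain with at most simple poles at `p1` and `p2`. Then `F = α·w + β` for some
`α, β ∈ ℂ`. -/
theorem stmt_11 (ω : ℂ) (hω : ω.im ≠ 0) (p1 p2 : ℂ) (hp : p1 - p2 ∉ lattice ω)
    (w : ℂ → ℂ)
    (hw : DifferentiableOn ℂ w (latDom ω p1 p2))
    (hwper1 : ∀ z ∈ latDom ω p1 p2, w (z + 1) = w z)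
    (hwperω : ∀ z ∈ latDom ω p1 p2, w (z + ω) = w z)
    (hwp1 : ∃ U ∈ nhds p1, ∃ g : ℂ → ℂ, DifferentiableOn ℂ g U ∧
      (∀ z ∈ U, z ≠ p1 → g z = (z - p1) * w z) ∧ g p1 = 1)
    (hwp2 : ∃ U ∈ nhds p2, ∃ g : ℂ → ℂ, DifferentiableOn ℂ g U ∧
      (∀ z ∈ U, z ≠ p2 → g z = (z - p2) * w z) ∧ g p2 = -1)
    (F : ℂ → ℂ)
    (hF : DifferentiableOn ℂ F (latDom ω p1 p2))
    (hFper1 : ∀ z ∈ latDom ω p1 p2, F (z + 1) = F z)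
    (hFperω : ∀ z ∈ latDom ω p1 p2, F (z + ω) = F z)
    (hFp1 : ∃ U ∈ nhds p1, ∃ g : ℂ → ℂ, DifferentiableOn ℂ g U ∧
      ∀ z ∈ U, z ≠ p1 → g z = (z - p1) * F z)
    (hFp2 : ∃ U ∈ nhds p2, ∃ g : ℂ → ℂ, DifferentiableOn ℂ g U ∧
      ∀ z ∈ U, z ≠ p2 → g z = (z - p2) * F z) :
    ∃ α β : ℂ, ∀ z ∈ latDom ω p1 p2, F z = α * w z + β := by
  obtain ⟨Uw₁, hUw₁, gw₁, hgw₁, hw₁, hgw₁p⟩ := hwp1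
  obtain ⟨Uw₂, hUw₂, gw₂, hgw₂, hw₂, -⟩ := hwp2
  obtain ⟨UF₁, hUF₁, gF₁, hgF₁, hF₁⟩ := hFp1
  obtain ⟨UF₂, hUF₂, gF₂, hgF₂, hF₂⟩ := hFp2
  have hw1 : HasSimplePoleAt w 1 p1 := hgw₁p ▸ hasSimplePoleAt_of_differentiableOn hUw₁ hgw₁ hw₁
  have hw2 := hasSimplePoleAt_of_differentiableOn hUw₂ hgw₂ hw₂
  have hF1 := hasSimplePoleAt_of_differentiableOn hUF₁ hgF₁ hF₁
  have hF2 := hasSimplePoleAt_of_differentiableOn hUF₂ hgF₂ hF₂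
  set α := gF₁ p1
  have hG1 : HasSimplePoleAt (fun z => F z - w z * α) 0 p1 := by
    simpa using hF1.sub (hw1.mul (analyticAt_const (v := α)))
  obtain ⟨β, hβ⟩ := exists_eq_const_on_latDom (f := fun z => F z - w z * α) hω hp
    (hF.sub (hw.mul_const α))
    (fun z hz => by simp only [hFper1 z hz, hwper1 z hz])
    (fun z hz => by simp only [hFperω z hz, hwperω z hz])
    hG1 (hF2.sub (hw2.mul analyticAt_const))
  exact ⟨α, β, fun z hz => by linear_combination hβ z hz⟩
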